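/- arXiv:1908.00745 — 2 statements merged into one kernel-verified Lean document; each statement's English description precedes it below -/
import Mathlib

section
/- Let A be a symmetric real n×n matrix with eigenvalues λ₁ ≥ … ≥ λₙ, ρ = λ₁ − λₙ, and β ≥ 2(1+γ)ρn for some γ > 0. Then for every z ∈ ℝⁿ with ‖z‖₂ = 1 satisfying |z_k² − 1/n| ≤ 1/(2n) for all k, and every v ∈ ℝⁿ with ‖v‖₂ = 1 and vᵀz = 0, the Riemannian Hessian quadratic form satisfies H_f(z)[v] = vᵀAv − zᵀAz + 6β Σₖ z_k² v_k² − 2β Σₖ z_k⁴ ≥ γρ. -/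
open Matrix Finset

/-!
Every Rayleigh quotient of `A` lies between its extreme eigenvalues, so
`vᵀAv - zᵀAz ≥ -ρ`. Near-uniformity of `z` gives `z_k² ≥ 1/(2n)`, hence `∑ z_k² v_k² ≥ 1/(2n)`,
and `∑ z_k⁴ = 1/n + ∑ (z_k² - 1/n)² ≤ 5/(4n)`. The quartic part of the Hessian is therefore at
least `6β/(2n) - 10β/(4n) = β/(2n) ≥ (1 + γ)ρ`.
-/

namespace Matrix.IsHermitian

variable {ι : Type*} [Fintype ι] [DecidableEq ι] {A : Matrix ι ι ℝ} (hA : A.IsHermitian)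

local notation "U" => (hA.eigenvectorUnitary : Matrix ι ι ℝ)

lemma vecMul_eigenvectorUnitary (x : ι → ℝ) : x ᵥ* U = star U *ᵥ x := by
  rw [star_eq_conjTranspose, conjTranspose_eq_transpose_of_trivial, mulVec_transpose]

lemma dotProduct_mulVec_self_eq_sum_eigenvalues (x : ι → ℝ) :
    x ⬝ᵥ A *ᵥ x = ∑ j, hA.eigenvalues j * (star U *ᵥ x) j ^ 2 := by
  conv_lhs => rw [hA.spectral_theorem, Unitary.conjStarAlgAut_apply, ← mulVec_mulVec,
    ← mulVec_mulVec, dotProduct_mulVec, vecMul_eigenvectorUnitary]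
  simp [dotProduct, mulVec_diagonal, sq, mul_left_comm]

lemma sum_sq_star_eigenvectorUnitary_mulVec (x : ι → ℝ) :
    ∑ j, (star U *ᵥ x) j ^ 2 = ∑ k, x k ^ 2 := by
  simp only [sq]
  change (star U *ᵥ x) ⬝ᵥ (star U *ᵥ x) = x ⬝ᵥ x
  nth_rw 1 [← vecMul_eigenvectorUnitary]
  rw [← dotProduct_mulVec, mulVec_mulVec, Unitary.mul_star_self_of_mem hA.eigenvectorUnitary.2,
    one_mulVec]

lemma iInf_eigenvalues_mul_le_dotProduct_mulVec (x : ι → ℝ) :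
    (⨅ i, hA.eigenvalues i) * ∑ k, x k ^ 2 ≤ x ⬝ᵥ A *ᵥ x := by
  rw [← hA.sum_sq_star_eigenvectorUnitary_mulVec, mul_sum,
    hA.dotProduct_mulVec_self_eq_sum_eigenvalues]
  gcongr with j
  exact ciInf_le (Set.finite_range _).bddBelow j

lemma dotProduct_mulVec_le_iSup_eigenvalues_mul (x : ι → ℝ) :
    x ⬝ᵥ A *ᵥ x ≤ (⨆ i, hA.eigenvalues i) * ∑ k, x k ^ 2 := by
  rw [← hA.sum_sq_star_eigenvectorUnitary_mulVec, mul_sum,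
    hA.dotProduct_mulVec_self_eq_sum_eigenvalues]
  gcongr with j
  exact le_ciSup (Set.finite_range _).bddAbove j

end Matrix.IsHermitian

section NearlyUniform

variable {ι : Type*} [Fintype ι]

lemma mul_sum_sq_le_sum_mul_sq {c : ℝ} {w : ι → ℝ} (hw : ∀ k, c ≤ w k) (v : ι → ℝ) :
    c * ∑ k, v k ^ 2 ≤ ∑ k, w k * v k ^ 2 := by
  rw [mul_sum]
  gcongr with k
  exact hw k

lemma card_pos_of_sum_eq_one {f : ι → ℝ} (hf : ∑ k, f k = 1) : 0 < Fintype.card ι :=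
  card_pos.mpr (nonempty_of_sum_ne_zero (hf ▸ one_ne_zero))

lemma sum_pow_four_eq_of_sum_sq_eq_one {z : ι → ℝ} (hz : ∑ k, z k ^ 2 = 1) :
    ∑ k, z k ^ 4 = 1 / Fintype.card ι + ∑ k, (z k ^ 2 - 1 / Fintype.card ι) ^ 2 := by
  have hN : (Fintype.card ι : ℝ) ≠ 0 := by exact_mod_cast (card_pos_of_sum_eq_one hz).ne'
  simp only [sub_sq, sum_add_distrib, sum_sub_distrib, ← sum_mul, ← mul_sum, ← pow_mul, hz,
    sum_const, card_univ, nsmul_eq_mul]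
  field_simp
  ring

variable {z : ι → ℝ}

lemma one_div_two_mul_card_le_sq
    (hzR : ∀ k, |z k ^ 2 - 1 / (Fintype.card ι : ℝ)| ≤ 1 / (2 * (Fintype.card ι : ℝ))) (k : ι) :
    1 / (2 * (Fintype.card ι : ℝ)) ≤ z k ^ 2 := by
  have hk := (abs_le.mp (hzR k)).1
  have hhalf : 1 / (Fintype.card ι : ℝ) - 1 / (2 * Fintype.card ι) = 1 / (2 * Fintype.card ι) := by
    ring
  linarith

lemma sum_pow_four_le (hz : ∑ k, z k ^ 2 = 1)
    (hzR : ∀ k, |z k ^ 2 - 1 / (Fintype.card ι : ℝ)| ≤ 1 / (2 * (Fintype.card ι : ℝ))) :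
    ∑ k, z k ^ 4 ≤ 5 / (4 * Fintype.card ι) := by
  have hN : (0 : ℝ) < Fintype.card ι := by exact_mod_cast card_pos_of_sum_eq_one hz
  have hdev : ∑ k, (z k ^ 2 - 1 / (Fintype.card ι : ℝ)) ^ 2
      ≤ ∑ _k : ι, (1 / (2 * (Fintype.card ι : ℝ))) ^ 2 := by
    refine sum_le_sum fun k _ ↦ ?_
    exact sq_le_sq' (abs_le.mp (hzR k)).1 (abs_le.mp (hzR k)).2
  rw [sum_const, card_univ, nsmul_eq_mul] at hdev
  rw [sum_pow_four_eq_of_sum_sq_eq_one hz]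
  calc _ ≤ 1 / (Fintype.card ι : ℝ) + Fintype.card ι * (1 / (2 * (Fintype.card ι : ℝ))) ^ 2 := by
        gcongr
    _ = 5 / (4 * Fintype.card ι) := by field_simp; ring

/-- For `‖v‖₂ = 1`, `β * quarticHessian z v` is the contribution of the penalty `(β/2) ∑ z_k⁴` to
the Riemannian Hessian `H_f(z)[v]`. -/
def quarticHessian (z v : ι → ℝ) : ℝ := 6 * ∑ k, z k ^ 2 * v k ^ 2 - 2 * ∑ k, z k ^ 4

lemma one_div_two_mul_card_le_quarticHessian (hz : ∑ k, z k ^ 2 = 1)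
    (hzR : ∀ k, |z k ^ 2 - 1 / (Fintype.card ι : ℝ)| ≤ 1 / (2 * (Fintype.card ι : ℝ)))
    {v : ι → ℝ} (hv : ∑ k, v k ^ 2 = 1) :
    1 / (2 * (Fintype.card ι : ℝ)) ≤ quarticHessian z v := by
  have hmix := mul_sum_sq_le_sum_mul_sq (one_div_two_mul_card_le_sq hzR) v
  rw [hv, mul_one] at hmix
  have hquartic := sum_pow_four_le hz hzR
  have hcoeff : 6 * (1 / (2 * (Fintype.card ι : ℝ))) - 2 * (5 / (4 * Fintype.card ι))
      = 1 / (2 * Fintype.card ι) := by ring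
  unfold quarticHessian
  linarith

end NearlyUniform

theorem stmt11_general {n : ℕ} (A : Matrix (Fin n) (Fin n) ℝ) (hA : A.IsHermitian)
    (γ β ρ : ℝ) (hγ : 0 < γ)
    (hρ : ρ = (⨆ i, hA.eigenvalues i) - (⨅ i, hA.eigenvalues i))
    (hβ : 2 * (1 + γ) * ρ * n ≤ β)
    (z : Fin n → ℝ) (hz : ∑ k, z k ^ 2 = 1)
    (hzR : ∀ k, |z k ^ 2 - 1 / (n : ℝ)| ≤ 1 / (2 * (n : ℝ)))
    (v : Fin n → ℝ) (hv : ∑ k, v k ^ 2 = 1) :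
    γ * ρ ≤ v ⬝ᵥ A.mulVec v - z ⬝ᵥ A.mulVec z
      + 6 * β * ∑ k, z k ^ 2 * v k ^ 2 - 2 * β * ∑ k, z k ^ 4 := by
  have hn : (0 : ℝ) < n := by simpa using card_pos_of_sum_eq_one hz
  have hQ : 1 / (2 * (n : ℝ)) ≤ quarticHessian z v := by
    simpa using one_div_two_mul_card_le_quarticHessian hz (by simpa using hzR) hv
  have hv_lower := hA.iInf_eigenvalues_mul_le_dotProduct_mulVec v
  have hz_upper := hA.dotProduct_mulVec_le_iSup_eigenvalues_mul z
  have hz_lower := hA.iInf_eigenvalues_mul_le_dotProduct_mulVec z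
  rw [hv, mul_one] at hv_lower
  rw [hz, mul_one] at hz_upper hz_lower
  have hρ_nonneg : 0 ≤ ρ := by linarith
  have hβ_nonneg : 0 ≤ β := le_trans (by positivity) hβ
  have hβn : (1 + γ) * ρ ≤ β * (1 / (2 * n)) := by
    rw [mul_one_div, le_div_iff₀ (by positivity)]
    linarith
  calc γ * ρ = -ρ + (1 + γ) * ρ := by ring
    _ ≤ (v ⬝ᵥ A *ᵥ v - z ⬝ᵥ A *ᵥ z) + β * quarticHessian z v :=
      add_le_add (by linarith) (hβn.trans (mul_le_mul_of_nonneg_left hQ hβ_nonneg))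
    _ = _ := by unfold quarticHessian; ring

theorem stmt11 {n : ℕ} (A : Matrix (Fin n) (Fin n) ℝ) (hA : A.IsHermitian)
    (γ β ρ : ℝ) (hγ : 0 < γ)
    (hρ : ρ = (⨆ i, hA.eigenvalues i) - (⨅ i, hA.eigenvalues i))
    (hβ : 2 * (1 + γ) * ρ * n ≤ β)
    (z : Fin n → ℝ) (hz : ∑ k, z k ^ 2 = 1)
    (hzR : ∀ k, |z k ^ 2 - 1 / (n : ℝ)| ≤ 1 / (2 * (n : ℝ)))
    (v : Fin n → ℝ) (hv : ∑ k, v k ^ 2 = 1) (hvz : ∑ k, v k * z k = 0) :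
    γ * ρ ≤ v ⬝ᵥ A.mulVec v - z ⬝ᵥ A.mulVec z
      + 6 * β * ∑ k, z k ^ 2 * v k ^ 2 - 2 * β * ∑ k, z k ^ 4 :=
  stmt11_general A hA γ β ρ hγ hρ hβ z hz hzR v hv
end

section
/- Let A be a real symmetric n×n matrix with λₙ(A) = 0 and spectral spread ρ, and suppose β > 18n³ρ/(n−1). Then every local minimizer y of f(z) = (1/2) zᵀAz + (β/2)‖z‖₄⁴ on the real unit sphere satisfies f(y) − min_{‖z‖=1} f(z) ≤ (1/(18n)) · min_{‖z‖=1} f(z). -/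
/-!
Let `y` be a local minimizer of `f` on the unit sphere and `λ = yᵀAy + 2β‖y‖₄⁴`. Along every
normalized line `t ↦ (y + t v) / ‖y + t v‖` with `v ⊥ y`, clearing the denominator turns
`f - f y` into a quartic polynomial in `t` which is nonnegative near `0`; its linear coefficient
vanishes and its quadratic coefficient is nonnegative. The first condition is the Lagrange
equation `(Ay)ₖ = (λ - 2β yₖ²) yₖ`; the second, for the Givens directions `yₗ eₖ - yₖ eₗ`, gives
`λ - ρ ≤ 12 β yₖ²` for every `k`. Since the spectrum of `A` lies in `[0, ρ]`,
`ρ yᵀAy ≥ ‖Ay‖² = ∑ yₖ² (λ - 2β yₖ²)²`, and by the previous bound this dominates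
`(λ - ρ) / (12 β)` times the variance-type sum `∑ (λ - 2β yₖ²)² ≥ 4β² (‖y‖₄⁴ - 1/n)`.
For `β > 18 n³ ρ / (n - 1)` this forces `f y ≤ (1 + 1/(18n)) β/(2n)`, while
`f ≥ β ‖z‖₄⁴ / 2 ≥ β/(2n)` on the whole sphere.
-/

open Matrix Finset Filter Topology

lemma eq_zero_of_eventually_nonneg_mul {φ : ℝ → ℝ} (hφ : ContinuousAt φ 0)
    (h : ∀ᶠ t in 𝓝 0, 0 ≤ t * φ t) : φ 0 = 0 := by
  have hright : ∀ᶠ t in 𝓝[>] (0 : ℝ), 0 ≤ φ t := by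
    filter_upwards [nhdsWithin_le_nhds h, self_mem_nhdsWithin] with t ht (htpos : 0 < t)
    exact nonneg_of_mul_nonneg_right ht htpos
  have hleft : ∀ᶠ t in 𝓝[<] (0 : ℝ), φ t ≤ 0 := by
    filter_upwards [nhdsWithin_le_nhds h, self_mem_nhdsWithin] with t ht (htneg : t < 0)
    exact nonpos_of_mul_nonneg_right ht htneg
  exact le_antisymm (le_of_tendsto (hφ.tendsto.mono_left nhdsWithin_le_nhds) hleft)
    (ge_of_tendsto (hφ.tendsto.mono_left nhdsWithin_le_nhds) hright)

lemma nonneg_of_eventually_nonneg_sq_mul {ψ : ℝ → ℝ} (hψ : ContinuousAt ψ 0)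
    (h : ∀ᶠ t in 𝓝 0, 0 ≤ t ^ 2 * ψ t) : 0 ≤ ψ 0 := by
  refine ge_of_tendsto (hψ.tendsto.mono_left (nhdsWithin_le_nhds (s := {0}ᶜ))) ?_
  filter_upwards [nhdsWithin_le_nhds h, self_mem_nhdsWithin] with t ht (ht0 : t ≠ 0)
  exact nonneg_of_mul_nonneg_right ht (by positivity)

lemma eq_zero_and_nonneg_of_eventually_nonneg_quartic {a b c d : ℝ}
    (h : ∀ᶠ t in 𝓝 0, 0 ≤ a * t + b * t ^ 2 + c * t ^ 3 + d * t ^ 4) : a = 0 ∧ 0 ≤ b := by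
  have ha := eq_zero_of_eventually_nonneg_mul
    (φ := fun t => a + b * t + c * t ^ 2 + d * t ^ 3) (by fun_prop)
    (h.mono fun t ht => by linear_combination ht)
  norm_num at ha
  subst ha
  have hb := nonneg_of_eventually_nonneg_sq_mul (ψ := fun t => b + c * t + d * t ^ 2)
    (by fun_prop) (h.mono fun t ht => by linear_combination ht)
  norm_num at hb
  exact ⟨rfl, hb⟩

lemma sum_sq_eq_dotProduct {ι : Type*} [Fintype ι] (w : ι → ℝ) : ∑ k, w k ^ 2 = w ⬝ᵥ w := by
  simp only [dotProduct, sq]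

lemma eq_dotProduct_smul_of_forall_dotProduct_eq_zero {ι R : Type*} [Fintype ι] [CommRing R]
    [LinearOrder R] [IsStrictOrderedRing R] {g y : ι → R} (hy : y ⬝ᵥ y = 1)
    (h : ∀ v, y ⬝ᵥ v = 0 → g ⬝ᵥ v = 0) : g = (g ⬝ᵥ y) • y := by
  set v := g - (g ⬝ᵥ y) • y
  have hyv : y ⬝ᵥ v = 0 := by
    simp only [v, dotProduct_sub, dotProduct_smul, hy, smul_eq_mul, mul_one, dotProduct_comm y g,
      sub_self]
  have hvv : v ⬝ᵥ v = 0 := by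
    calc v ⬝ᵥ v = g ⬝ᵥ v - (g ⬝ᵥ y) * (y ⬝ᵥ v) := by
          simp only [v, sub_dotProduct, smul_dotProduct, smul_eq_mul]
      _ = 0 := by rw [h v hyv, hyv]; ring
  exact sub_eq_zero.mp (dotProduct_self_eq_zero.mp hvv)

lemma card_mul_sum_sq_sub_sq_sum_le {ι : Type*} [Fintype ι] (x : ι → ℝ) (c : ℝ) :
    Fintype.card ι * ∑ k, x k ^ 2 - (∑ k, x k) ^ 2 ≤ Fintype.card ι * ∑ k, (c - x k) ^ 2 := by
  have h : ∑ k, (c - x k) ^ 2 = Fintype.card ι * c ^ 2 - 2 * c * ∑ k, x k + ∑ k, x k ^ 2 := by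
    simp only [sub_sq, sum_add_distrib, sum_sub_distrib, sum_const, card_univ, nsmul_eq_mul,
      mul_sum]
  rw [h]
  nlinarith [sq_nonneg (Fintype.card ι * c - ∑ k, x k)]

lemma mul_card_mul_sum_sq_sub_sq_sum_le {ι : Type*} [Fintype ι] {x : ι → ℝ} {μ : ℝ} (c : ℝ)
    (hx : ∀ k, 0 ≤ x k) (hμ : ∀ k, μ ≤ x k) :
    μ * (Fintype.card ι * ∑ k, x k ^ 2 - (∑ k, x k) ^ 2) ≤
      Fintype.card ι * ∑ k, x k * (c - x k) ^ 2 := by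
  rcases le_total 0 μ with hμ0 | hμ0
  · calc μ * (Fintype.card ι * ∑ k, x k ^ 2 - (∑ k, x k) ^ 2)
        ≤ μ * (Fintype.card ι * ∑ k, (c - x k) ^ 2) :=
          mul_le_mul_of_nonneg_left (card_mul_sum_sq_sub_sq_sum_le x c) hμ0
      _ = Fintype.card ι * ∑ k, μ * (c - x k) ^ 2 := by rw [← mul_sum]; ring
      _ ≤ Fintype.card ι * ∑ k, x k * (c - x k) ^ 2 := by
          gcongr with k
          exact hμ k
  · have hvar := sq_sum_le_card_mul_sum_sq (s := univ) (f := x)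
    rw [card_univ] at hvar
    have : 0 ≤ ∑ k, x k * (c - x k) ^ 2 := sum_nonneg fun k _ => mul_nonneg (hx k) (sq_nonneg _)
    nlinarith

lemma one_le_card_mul_sum_pow_four {ι : Type*} [Fintype ι] {w : ι → ℝ}
    (hw : ∑ k, w k ^ 2 = 1) : 1 ≤ Fintype.card ι * ∑ k, w k ^ 4 := by
  have h := sq_sum_le_card_mul_sum_sq (s := univ) (f := fun k => w k ^ 2)
  simpa [hw, ← pow_mul] using h

lemma exists_ne_sq_add_sq_pos {ι : Type*} [Nontrivial ι] {y : ι → ℝ} (hy : y ≠ 0) (k : ι) :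
    ∃ l ≠ k, 0 < y k ^ 2 + y l ^ 2 := by
  by_cases hk : y k = 0
  · obtain ⟨l, hl⟩ := Function.ne_iff.mp hy
    exact ⟨l, fun h => hl (h ▸ hk), by rw [hk]; simpa using pow_two_pos_of_ne_zero hl⟩
  · obtain ⟨l, hl⟩ := exists_ne k
    exact ⟨l, hl, by positivity⟩

lemma add_mul_le_of_sub_mul_le {n ρ β q p : ℝ} (hn : 2 ≤ n) (hβ : 18 * n ^ 3 * ρ < β * (n - 1))
    (hβ0 : 0 < β) (hq0 : 0 ≤ q) (hqρ : q ≤ ρ) (hp : 1 ≤ n * p)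
    (hkey : (q + 2 * β * p - ρ) * (β * (n * p - 1)) ≤ 3 * n * ρ * q) :
    q + β * p ≤ (1 + 1 / (18 * n)) * (β / n) := by
  have hρ : 0 ≤ ρ := hq0.trans hqρ
  have hnρ : n * ρ < β := by
    refine lt_of_mul_lt_mul_left ?_ (by positivity : (0 : ℝ) ≤ 18 * n ^ 2)
    nlinarith [mul_le_mul_of_nonneg_left (by nlinarith : n - 1 ≤ 18 * n ^ 2) hβ0.le]
  have hgap : β < n * (q + 2 * β * p - ρ) := by nlinarith
  have hsq : β ^ 2 * (n * p - 1) ≤ 3 * n ^ 2 * ρ * q := by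
    nlinarith [mul_le_mul_of_nonneg_right hgap.le (mul_nonneg hβ0.le (sub_nonneg.2 hp))]
  have hr : 18 * n ^ 3 * ρ * β ≤ β ^ 2 * (n - 1) := by nlinarith
  have hr2 : (18 * n ^ 3 * ρ) ^ 2 ≤ (β * (n - 1)) ^ 2 := by
    have : 0 ≤ 18 * n ^ 3 * ρ := by positivity
    nlinarith
  -- with `r = 18 n³ ρ`, the left side times `6 n³` is `6 n² r β + r² ≤ (6n³ - 5n² - 2n + 1) β²`
  have hρβ : 18 * n ^ 2 * ρ * β + 54 * n ^ 3 * ρ ^ 2 ≤ β ^ 2 := by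
    refine le_of_mul_le_mul_left ?_ (by positivity : (0 : ℝ) < 6 * n ^ 3)
    nlinarith
  have hmain : 18 * n ^ 2 * q + 18 * n * β * (n * p - 1) ≤ β := by
    refine le_of_mul_le_mul_left ?_ hβ0
    nlinarith [mul_le_mul_of_nonneg_left hqρ
      (by positivity : (0 : ℝ) ≤ 18 * n ^ 2 * β + 54 * n ^ 3 * ρ)]
  have hn0 : 0 < n := by linarith
  rw [show (1 + 1 / (18 * n)) * (β / n) = (18 * n * β + β) / (18 * n ^ 2) by field_simp,
    le_div_iff₀ (by positivity)]
  nlinarith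

namespace Matrix.IsHermitian

variable {ι : Type*} [Fintype ι] [DecidableEq ι] {A : Matrix ι ι ℝ} {ρ : ℝ}

lemma exists_eigencoords (hA : A.IsHermitian) (z : ι → ℝ) : ∃ w : ι → ℝ,
    z ⬝ᵥ A *ᵥ z = ∑ i, hA.eigenvalues i * w i ^ 2 ∧ z ⬝ᵥ z = ∑ i, w i ^ 2 ∧
      (A *ᵥ z) ⬝ᵥ (A *ᵥ z) = ∑ i, hA.eigenvalues i ^ 2 * w i ^ 2 := by
  set U : Matrix ι ι ℝ := (hA.eigenvectorUnitary : Matrix ι ι ℝ)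
  have hUU : star U * U = 1 := Unitary.coe_star_mul_self hA.eigenvectorUnitary
  have hUU' : U * star U = 1 := Unitary.coe_mul_star_self hA.eigenvectorUnitary
  have hstar : star U = Uᵀ := by
    rw [star_eq_conjTranspose]; ext i j; simp [conjTranspose_apply]
  set w := star U *ᵥ z
  have hnorm : ∀ x x', (U *ᵥ x) ⬝ᵥ (U *ᵥ x') = x ⬝ᵥ x' := fun x x' => by
    rw [dotProduct_mulVec, ← vecMul_transpose, vecMul_vecMul, ← hstar, hUU, vecMul_one]
  have hz : z = U *ᵥ w := by rw [mulVec_mulVec, hUU', one_mulVec]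
  have hAz : A *ᵥ z = U *ᵥ (diagonal hA.eigenvalues *ᵥ w) := by
    have hdiag : A = U * diagonal hA.eigenvalues * star U := by simpa using hA.spectral_theorem
    calc A *ᵥ z = (U * diagonal hA.eigenvalues * star U) *ᵥ (U *ᵥ w) := by rw [← hdiag, ← hz]
      _ = U *ᵥ (diagonal hA.eigenvalues *ᵥ w) := by
        simp only [mulVec_mulVec, Matrix.mul_assoc, hUU, Matrix.mul_one]
  refine ⟨w, ?_, by rw [hz, hnorm, sum_sq_eq_dotProduct], ?_⟩
  · rw [hAz, hz, hnorm]
    simp only [dotProduct, mulVec_diagonal]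
    exact sum_congr rfl fun i _ => by ring
  · rw [hAz, hnorm, ← sum_sq_eq_dotProduct]
    simp [mulVec_diagonal, mul_pow]

lemma dotProduct_mulVec_nonneg_of_eigenvalues_nonneg (hA : A.IsHermitian)
    (h0 : ∀ i, 0 ≤ hA.eigenvalues i) (z : ι → ℝ) : 0 ≤ z ⬝ᵥ A *ᵥ z := by
  obtain ⟨w, hq, -, -⟩ := hA.exists_eigencoords z
  rw [hq]
  exact sum_nonneg fun i _ => mul_nonneg (h0 i) (sq_nonneg _)

lemma dotProduct_mulVec_le_of_eigenvalues_le (hA : A.IsHermitian)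
    (hρ : ∀ i, hA.eigenvalues i ≤ ρ) (z : ι → ℝ) : z ⬝ᵥ A *ᵥ z ≤ ρ * (z ⬝ᵥ z) := by
  obtain ⟨w, hq, hn, -⟩ := hA.exists_eigencoords z
  rw [hq, hn, mul_sum]
  exact sum_le_sum fun i _ => mul_le_mul_of_nonneg_right (hρ i) (sq_nonneg _)

lemma mulVec_dotProduct_mulVec_le (hA : A.IsHermitian) (h0 : ∀ i, 0 ≤ hA.eigenvalues i)
    (hρ : ∀ i, hA.eigenvalues i ≤ ρ) (z : ι → ℝ) :
    (A *ᵥ z) ⬝ᵥ (A *ᵥ z) ≤ ρ * (z ⬝ᵥ A *ᵥ z) := by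
  obtain ⟨w, hq, -, hA2⟩ := hA.exists_eigencoords z
  rw [hA2, hq, mul_sum]
  refine sum_le_sum fun i _ => ?_
  nlinarith [mul_le_mul_of_nonneg_right (mul_le_mul_of_nonneg_left (hρ i) (h0 i))
    (sq_nonneg (w i))]

end Matrix.IsHermitian

lemma IsLocalMinOn.eventually_le_comp_normalized_line {ι : Type*} [Fintype ι]
    {f : (ι → ℝ) → ℝ} {y v : ι → ℝ} (hmin : IsLocalMinOn f {w | ∑ k, w k ^ 2 = 1} y)
    (hy : ∑ k, y k ^ 2 = 1) (hv : y ⬝ᵥ v = 0) :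
    ∀ᶠ t in 𝓝 0, f y ≤ f ((√(1 + t ^ 2 * (v ⬝ᵥ v)))⁻¹ • (y + t • v)) := by
  have hN : ∀ t : ℝ, 0 < 1 + t ^ 2 * (v ⬝ᵥ v) := fun t => by
    have : 0 ≤ v ⬝ᵥ v := by simpa using dotProduct_self_star_nonneg v
    positivity
  set γ : ℝ → ι → ℝ := fun t => (√(1 + t ^ 2 * (v ⬝ᵥ v)))⁻¹ • (y + t • v)
  have hγS : ∀ t, γ t ∈ {w : ι → ℝ | ∑ k, w k ^ 2 = 1} := fun t => by
    rw [sum_sq_eq_dotProduct] at hy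
    simp only [Set.mem_ofPred_eq, sum_sq_eq_dotProduct, γ, smul_dotProduct, dotProduct_smul,
      dotProduct_add, add_dotProduct, smul_eq_mul, hy, hv, dotProduct_comm v y]
    have hsqrt := Real.sq_sqrt (hN t).le
    have hne := (Real.sqrt_pos.2 (hN t)).ne'
    field_simp
    linear_combination hsqrt.symm
  have hγ : Continuous γ := by
    have := fun t => (Real.sqrt_pos.2 (hN t)).ne'
    fun_prop (disch := exact this _)
  have hlim : Tendsto γ (𝓝 0) (𝓝[{w | ∑ k, w k ^ 2 = 1}] y) := by
    refine tendsto_nhdsWithin_iff.2 ⟨?_, Eventually.of_forall hγS⟩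
    simpa [γ] using hγ.tendsto 0
  exact hlim.eventually hmin

section QuarticObjective

variable {ι : Type*} [Fintype ι] {A : Matrix ι ι ℝ} {β ρ : ℝ} {y : ι → ℝ}

noncomputable def quarticObjective (A : Matrix ι ι ℝ) (β : ℝ) (w : ι → ℝ) : ℝ :=
  1 / 2 * (w ⬝ᵥ A *ᵥ w) + β / 2 * ∑ k, w k ^ 4

/-- The Lagrange multiplier `λ` of the sphere constraint at a critical point `y`. -/
noncomputable def quarticMultiplier (A : Matrix ι ι ℝ) (β : ℝ) (y : ι → ℝ) : ℝ :=
  y ⬝ᵥ A *ᵥ y + 2 * β * ∑ k, y k ^ 4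

lemma quarticObjective_smul (c : ℝ) (w : ι → ℝ) :
    quarticObjective A β (c • w) =
      c ^ 2 * (1 / 2 * (w ⬝ᵥ A *ᵥ w)) + c ^ 4 * (β / 2 * ∑ k, w k ^ 4) := by
  simp only [quarticObjective, mulVec_smul, dotProduct_smul, smul_dotProduct, smul_eq_mul,
    Pi.smul_apply, mul_pow, ← mul_sum]
  ring

lemma div_le_quarticObjective (hA : ∀ z, 0 ≤ z ⬝ᵥ A *ᵥ z) (hβ : 0 ≤ β) {w : ι → ℝ}
    (hw : ∑ k, w k ^ 2 = 1) : β / (2 * Fintype.card ι) ≤ quarticObjective A β w := by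
  have hp := one_le_card_mul_sum_pow_four hw
  have hcard : (0 : ℝ) < Fintype.card ι :=
    pos_of_mul_pos_left (one_pos.trans_le hp) (sum_nonneg fun k _ => by positivity)
  rw [quarticObjective, div_le_iff₀ (by positivity)]
  nlinarith [mul_le_mul_of_nonneg_left hp hβ, mul_nonneg hcard.le (hA w)]

lemma dotProduct_mulVec_add_smul (hA : A.IsSymm) (y v : ι → ℝ) (t : ℝ) :
    (y + t • v) ⬝ᵥ A *ᵥ (y + t • v) =
      y ⬝ᵥ A *ᵥ y + 2 * t * ((A *ᵥ y) ⬝ᵥ v) + t ^ 2 * (v ⬝ᵥ A *ᵥ v) := by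
  have hsym : y ⬝ᵥ A *ᵥ v = (A *ᵥ y) ⬝ᵥ v := by
    rw [dotProduct_mulVec, ← mulVec_transpose, hA.eq]
  simp only [mulVec_add, mulVec_smul, dotProduct_add, add_dotProduct, dotProduct_smul,
    smul_dotProduct, smul_eq_mul, hsym, dotProduct_comm v (A *ᵥ y)]
  ring

lemma sum_add_smul_pow_four (y v : ι → ℝ) (t : ℝ) :
    ∑ k, (y + t • v) k ^ 4 = ∑ k, y k ^ 4 + 4 * t * ∑ k, y k ^ 3 * v k +
      6 * t ^ 2 * ∑ k, y k ^ 2 * v k ^ 2 + 4 * t ^ 3 * ∑ k, y k * v k ^ 3 +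
      t ^ 4 * ∑ k, v k ^ 4 := by
  simp only [mul_sum, ← sum_add_distrib]
  exact sum_congr rfl fun k _ => by simp only [Pi.add_apply, Pi.smul_apply, smul_eq_mul]; ring

lemma exists_quarticObjective_normalized_line_eq (hA : A.IsSymm) (y v : ι → ℝ) :
    ∃ c d : ℝ, ∀ t : ℝ, (1 + t ^ 2 * (v ⬝ᵥ v)) ^ 2 *
        (quarticObjective A β ((√(1 + t ^ 2 * (v ⬝ᵥ v)))⁻¹ • (y + t • v)) -
          quarticObjective A β y) =
      ((A *ᵥ y + (2 * β) • fun k => y k ^ 3) ⬝ᵥ v) * t +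
        (v ⬝ᵥ A *ᵥ v + 6 * β * ∑ k, y k ^ 2 * v k ^ 2 - quarticMultiplier A β y * (v ⬝ᵥ v)) / 2 *
          t ^ 2 + c * t ^ 3 + d * t ^ 4 := by
  refine ⟨(A *ᵥ y) ⬝ᵥ v * (v ⬝ᵥ v) + 2 * β * ∑ k, y k * v k ^ 3,
    v ⬝ᵥ A *ᵥ v * (v ⬝ᵥ v) / 2 + β / 2 * ∑ k, v k ^ 4 - (v ⬝ᵥ v) ^ 2 * quarticObjective A β y,
    fun t => ?_⟩
  have hN : 0 < 1 + t ^ 2 * (v ⬝ᵥ v) := by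
    have : 0 ≤ v ⬝ᵥ v := by simpa using dotProduct_self_star_nonneg v
    positivity
  have hc2 : (√(1 + t ^ 2 * (v ⬝ᵥ v)))⁻¹ ^ 2 = (1 + t ^ 2 * (v ⬝ᵥ v))⁻¹ := by
    rw [inv_pow, Real.sq_sqrt hN.le]
  have hc4 : (√(1 + t ^ 2 * (v ⬝ᵥ v)))⁻¹ ^ 4 = ((1 + t ^ 2 * (v ⬝ᵥ v))⁻¹) ^ 2 := by
    rw [← hc2, ← pow_mul]
  have hgrad : (A *ᵥ y + (2 * β) • fun k => y k ^ 3) ⬝ᵥ v =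
      (A *ᵥ y) ⬝ᵥ v + 2 * β * ∑ k, y k ^ 3 * v k := by
    rw [add_dotProduct, smul_dotProduct, smul_eq_mul]
    rfl
  rw [quarticObjective_smul, dotProduct_mulVec_add_smul hA, sum_add_smul_pow_four, hc2, hc4,
    hgrad, quarticMultiplier, quarticObjective]
  field_simp
  ring

theorem IsLocalMinOn.quarticObjective_tangent_conditions (hA : A.IsSymm) {v : ι → ℝ}
    (hmin : IsLocalMinOn (quarticObjective A β) {w | ∑ k, w k ^ 2 = 1} y)
    (hy : ∑ k, y k ^ 2 = 1) (hv : y ⬝ᵥ v = 0) :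
    (A *ᵥ y + (2 * β) • fun k => y k ^ 3) ⬝ᵥ v = 0 ∧
      quarticMultiplier A β y * (v ⬝ᵥ v) ≤ v ⬝ᵥ A *ᵥ v + 6 * β * ∑ k, y k ^ 2 * v k ^ 2 := by
  obtain ⟨c, d, hquartic⟩ := exists_quarticObjective_normalized_line_eq (β := β) hA y v
  obtain ⟨ha, hb⟩ := eq_zero_and_nonneg_of_eventually_nonneg_quartic
    ((hmin.eventually_le_comp_normalized_line hy hv).mono fun t ht =>
      hquartic t ▸ mul_nonneg (sq_nonneg _) (sub_nonneg.2 ht))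
  exact ⟨ha, by linarith⟩

lemma IsLocalMinOn.quarticObjective_mulVec_apply (hA : A.IsSymm)
    (hmin : IsLocalMinOn (quarticObjective A β) {w | ∑ k, w k ^ 2 = 1} y)
    (hy : ∑ k, y k ^ 2 = 1) (k : ι) :
    (A *ᵥ y) k = (quarticMultiplier A β y - 2 * β * y k ^ 2) * y k := by
  have hy' : y ⬝ᵥ y = 1 := by rwa [← sum_sq_eq_dotProduct]
  have hg := eq_dotProduct_smul_of_forall_dotProduct_eq_zero hy' fun v hv =>
    (hmin.quarticObjective_tangent_conditions hA hy hv).1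
  have hgy : (A *ᵥ y + (2 * β) • fun j => y j ^ 3) ⬝ᵥ y = quarticMultiplier A β y := by
    rw [add_dotProduct, smul_dotProduct, smul_eq_mul, dotProduct_comm (A *ᵥ y)]
    simp only [quarticMultiplier, dotProduct, ← pow_succ]
  have hk := congrFun hg k
  simp only [hgy, Pi.add_apply, Pi.smul_apply, smul_eq_mul] at hk
  linear_combination hk

lemma IsLocalMinOn.quarticMultiplier_sub_le [Nontrivial ι] [DecidableEq ι] (hA : A.IsSymm)
    (hβ : 0 ≤ β) (hρ : ∀ z, z ⬝ᵥ A *ᵥ z ≤ ρ * (z ⬝ᵥ z))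
    (hmin : IsLocalMinOn (quarticObjective A β) {w | ∑ k, w k ^ 2 = 1} y)
    (hy : ∑ k, y k ^ 2 = 1) (k : ι) :
    quarticMultiplier A β y - ρ ≤ 12 * β * y k ^ 2 := by
  have hy0 : y ≠ 0 := by rintro rfl; simp at hy
  obtain ⟨l, hlk, hs⟩ := exists_ne_sq_add_sq_pos hy0 k
  set v : ι → ℝ := Pi.single k (y l) - Pi.single l (y k)
  have hv : y ⬝ᵥ v = 0 := by
    simp only [v, dotProduct_sub, dotProduct_single]
    ring
  have hvv : v ⬝ᵥ v = y k ^ 2 + y l ^ 2 := by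
    simp [v, dotProduct_sub, hlk, hlk.symm]
    ring
  have hyv : ∑ j, y j ^ 2 * v j ^ 2 = 2 * (y k ^ 2 * y l ^ 2) := by
    rw [Fintype.sum_eq_add k l hlk.symm fun j hj => by simp [v, hj.1, hj.2]]
    simp [v, hlk, hlk.symm]
    ring
  have hSO := (hmin.quarticObjective_tangent_conditions hA hy hv).2
  have hvAv := hρ v
  rw [hvv, hyv] at hSO
  rw [hvv] at hvAv
  refine le_of_mul_le_mul_right ?_ hs
  nlinarith [mul_nonneg hβ (mul_nonneg (sq_nonneg (y k)) (sq_nonneg (y k)))]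

lemma IsLocalMinOn.quarticMultiplier_sub_mul_le [Nontrivial ι] [DecidableEq ι]
    (hA : A.IsHermitian) (h0 : ∀ i, 0 ≤ hA.eigenvalues i) (hρ : ∀ i, hA.eigenvalues i ≤ ρ)
    (hβ : 0 < β) (hmin : IsLocalMinOn (quarticObjective A β) {w | ∑ k, w k ^ 2 = 1} y)
    (hy : ∑ k, y k ^ 2 = 1) :
    (quarticMultiplier A β y - ρ) * (β * (Fintype.card ι * ∑ k, y k ^ 4 - 1)) ≤
      3 * Fintype.card ι * ρ * (y ⬝ᵥ A *ᵥ y) := by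
  have hsym : A.IsSymm := isHermitian_iff_isSymm.mp hA
  have hd := hmin.quarticObjective_mulVec_apply hsym hy
  have hAy : ∑ k, 2 * β * y k ^ 2 * (quarticMultiplier A β y - 2 * β * y k ^ 2) ^ 2 ≤
      2 * β * (ρ * (y ⬝ᵥ A *ᵥ y)) := by
    calc _ = ∑ k, 2 * β * (A *ᵥ y) k ^ 2 := sum_congr rfl fun k _ => by rw [hd k]; ring
      _ = 2 * β * ((A *ᵥ y) ⬝ᵥ (A *ᵥ y)) := by rw [← mul_sum, sum_sq_eq_dotProduct]
      _ ≤ _ := mul_le_mul_of_nonneg_left (hA.mulVec_dotProduct_mulVec_le h0 hρ y) (by positivity)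
  have hvar := mul_card_mul_sum_sq_sub_sq_sum_le (x := fun k => 2 * β * y k ^ 2)
    (μ := (quarticMultiplier A β y - ρ) / 6) (quarticMultiplier A β y)
    (fun k => by positivity) fun k => by
      linarith [hmin.quarticMultiplier_sub_le hsym hβ.le
        (hA.dotProduct_mulVec_le_of_eigenvalues_le hρ) hy k]
  have hx : ∑ k, 2 * β * y k ^ 2 = 2 * β := by rw [← mul_sum, hy, mul_one]
  have hx2 : ∑ k, (2 * β * y k ^ 2) ^ 2 = 4 * β ^ 2 * ∑ k, y k ^ 4 := by
    rw [mul_sum]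
    exact sum_congr rfl fun k _ => by ring
  rw [hx, hx2] at hvar
  refine le_of_mul_le_mul_left ?_ (by positivity : (0 : ℝ) < 2 * β / 3)
  nlinarith [mul_le_mul_of_nonneg_left hAy (Nat.cast_nonneg (Fintype.card ι) : (0 : ℝ) ≤ _)]

theorem IsLocalMinOn.quarticObjective_le_mul_sInf [DecidableEq ι] (hA : A.IsHermitian)
    (h0 : ∀ i, 0 ≤ hA.eigenvalues i) (hρ : ∀ i, hA.eigenvalues i ≤ ρ)
    (hcard : 2 ≤ Fintype.card ι)
    (hβ : 18 * (Fintype.card ι : ℝ) ^ 3 * ρ < β * (Fintype.card ι - 1))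
    (hmin : IsLocalMinOn (quarticObjective A β) {w | ∑ k, w k ^ 2 = 1} y)
    (hy : ∑ k, y k ^ 2 = 1) :
    quarticObjective A β y ≤ (1 + 1 / (18 * Fintype.card ι)) *
      sInf (quarticObjective A β '' {w | ∑ k, w k ^ 2 = 1}) := by
  have : Nontrivial ι := Fintype.one_lt_card_iff_nontrivial.mp hcard
  have hn : (2 : ℝ) ≤ Fintype.card ι := by exact_mod_cast hcard
  have hq0 := hA.dotProduct_mulVec_nonneg_of_eigenvalues_nonneg h0 y
  have hqρ : y ⬝ᵥ A *ᵥ y ≤ ρ := by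
    simpa [← sum_sq_eq_dotProduct, hy] using hA.dotProduct_mulVec_le_of_eigenvalues_le hρ y
  have hβ0 : 0 < β := pos_of_mul_pos_left
    ((by have := hq0.trans hqρ; positivity : 0 ≤ 18 * (Fintype.card ι : ℝ) ^ 3 * ρ).trans_lt hβ)
    (by linarith)
  have hfy := add_mul_le_of_sub_mul_le hn hβ hβ0 hq0 hqρ (one_le_card_mul_sum_pow_four hy)
    (hmin.quarticMultiplier_sub_mul_le hA h0 hρ hβ0 hy)
  have hinf : β / (2 * Fintype.card ι) ≤ sInf (quarticObjective A β '' {w | ∑ k, w k ^ 2 = 1}) :=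
    le_csInf ⟨_, y, hy, rfl⟩ fun _ ⟨w, hw, hfw⟩ => hfw ▸
      div_le_quarticObjective (hA.dotProduct_mulVec_nonneg_of_eigenvalues_nonneg h0) hβ0.le hw
  calc quarticObjective A β y = (y ⬝ᵥ A *ᵥ y + β * ∑ k, y k ^ 4) / 2 := by
        rw [quarticObjective]; ring
    _ ≤ (1 + 1 / (18 * Fintype.card ι)) * (β / Fintype.card ι) / 2 := by linarith
    _ = (1 + 1 / (18 * Fintype.card ι)) * (β / (2 * Fintype.card ι)) := by ring
    _ ≤ _ := mul_le_mul_of_nonneg_left hinf (by positivity)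

end QuarticObjective

theorem stmt17 {n : ℕ} (hn : 2 ≤ n) (A : Matrix (Fin n) (Fin n) ℝ) (hA : A.IsHermitian)
    (ρ β : ℝ)
    (hρ : ρ = (⨆ i, hA.eigenvalues i) - (⨅ i, hA.eigenvalues i))
    (hlamn : (⨅ i, hA.eigenvalues i) = 0)
    (hβ : 18 * (n : ℝ) ^ 3 * ρ / ((n : ℝ) - 1) < β)
    (f : (Fin n → ℝ) → ℝ)
    (hf : f = fun w => (1 / 2) * (w ⬝ᵥ A.mulVec w) + (β / 2) * ∑ k, w k ^ 4)
    (y : Fin n → ℝ) (hy : ∑ k, y k ^ 2 = 1)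
    (hmin : IsLocalMinOn f {w | ∑ k, w k ^ 2 = 1} y) :
    f y - sInf (f '' {w | ∑ k, w k ^ 2 = 1}) ≤
      (1 / (18 * (n : ℝ))) * sInf (f '' {w | ∑ k, w k ^ 2 = 1}) := by
  have hf' : f = quarticObjective A β := hf
  subst hf'
  have heig0 : ∀ i, 0 ≤ hA.eigenvalues i := fun i =>
    hlamn ▸ ciInf_le (Finite.bddBelow_range _) i
  have heigρ : ∀ i, hA.eigenvalues i ≤ ρ := fun i => by
    rw [hρ, hlamn, sub_zero]
    exact le_ciSup (Finite.bddAbove_range _) i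
  have hn' : (2 : ℝ) ≤ n := by exact_mod_cast hn
  have hβ' : 18 * (n : ℝ) ^ 3 * ρ < β * (n - 1) := (div_lt_iff₀ (by linarith)).mp hβ
  have hfy := hmin.quarticObjective_le_mul_sInf hA heig0 heigρ (by simpa using hn)
    (by simpa using hβ') hy
  rw [Fintype.card_fin, add_mul, one_mul] at hfy
  linarith
end
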